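/- A nonzero element x = a_0 + 2a_1 + u a_2 + 2u a_3 of the Galois extension GR(R,r), with a_0, a_1, a_2, a_3 Teichmüller representatives, is a unit if and only if a_0 is nonzero; moreover x^4 = a_0^4 for every x in GR(R,r). -/

import Mathlib

/-!
Write `x = a₀ + n` with `n = 2a₁ + u a₂ + 2u a₃`. As `4 = 0` and `u² = 0`, `n² = 0`; hence
`x⁴ = a₀⁴ + 4a₀³n = a₀⁴`, and `x` is a unit exactly when `a₀` is. Reduction modulo `(2, u)` maps
`GR(R,r)` to the field `𝔽₂[x]/(f̄)` with nil kernel, so the only idempotents of `GR(R,r)` are `0`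
and `1`. Since `a₀^(2^r - 1)` is idempotent, `a₀` is either `0` or a unit.
-/

set_option maxSynthPendingDepth 3
set_option synthInstance.maxHeartbeats 400000

open DualNumber TrivSqZeroExt Polynomial

/-- The ring `R = ℤ₄[u]/(u²)`, realized as dual numbers over `ℤ₄`. -/
abbrev R4 := DualNumber (ZMod 4)

/-- Reduction `R → R/(2,u) ≅ 𝔽₂` modulo the maximal ideal `(2,u)`. -/
noncomputable def res : R4 →+* ZMod 2 :=
  (ZMod.castHom (show 2 ∣ 4 by norm_num) (ZMod 2)).comp
    (fstHom (ZMod 4) (ZMod 4) (ZMod 4)).toRingHom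

/-- The image of `u` in the Galois extension `GR(R,r) = R[x]/(f)`. -/
noncomputable def uGR (f : Polynomial R4) : Polynomial R4 ⧸ Ideal.span {f} :=
  Ideal.Quotient.mk (Ideal.span {f}) (C eps)

section CommRing

variable {A : Type*} [CommRing A]

theorem IsIdempotentElem.eq_zero_or_one_of_ker_isNilpotent {K : Type*} [CommRing K] [IsDomain K]
    (φ : A →+* K) (hφ : ∀ a, φ a = 0 → IsNilpotent a) {e : A} (he : IsIdempotentElem e) :
    e = 0 ∨ e = 1 := by
  rcases IsIdempotentElem.iff_eq_zero_or_one.mp (he.map φ) with h | h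
  · exact Or.inl (he.eq_zero_of_isNilpotent (hφ e h))
  · refine Or.inr (sub_eq_zero.mp ?_).symm
    exact he.one_sub.eq_zero_of_isNilpotent (hφ _ (by rw [map_sub, map_one, h, sub_self]))

theorem eq_zero_or_isUnit_of_pow_eq_self
    (hA : ∀ e : A, IsIdempotentElem e → e = 0 ∨ e = 1) {a : A} {n : ℕ} (hn : 2 ≤ n)
    (ha : a ^ n = a) : a = 0 ∨ IsUnit a := by
  obtain ⟨m, rfl⟩ := Nat.exists_eq_add_of_le' hn
  have hae : a * a ^ (m + 1) = a := by rw [← pow_succ', ha]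
  have he : IsIdempotentElem (a ^ (m + 1)) := by
    rw [IsIdempotentElem, ← pow_add, show m + 1 + (m + 1) = m + 2 + m by ring, pow_add, ha,
      ← pow_succ']
  rcases hA _ he with h | h
  · exact Or.inl (by rw [← hae, h, mul_zero])
  · exact Or.inr (IsUnit.of_mul_eq_one (a ^ m) (by rw [← pow_succ', h]))

theorem isUnit_add_iff_ne_zero_of_isNilpotent {a n : A} (ha : a = 0 ∨ IsUnit a)
    (hn : IsNilpotent n) (hx : a + n ≠ 0) : IsUnit (a + n) ↔ a ≠ 0 := by
  refine ⟨?_, fun ha0 => hn.isUnit_add_left_of_commute (ha.resolve_left ha0) (Commute.all _ _)⟩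
  rintro hunit rfl
  have : Nontrivial A := nontrivial_of_ne _ _ hx
  exact hn.not_isUnit (by simpa using hunit)

theorem sq_eq_zero_of_four_eq_zero (h4 : (4 : A) = 0) {u : A} (hu : u * u = 0) (b c d : A) :
    (2 * b + u * c + 2 * u * d) ^ 2 = 0 := by
  linear_combination (b ^ 2 + u * b * c + 2 * u * b * d + u ^ 2 * c * d + u ^ 2 * d ^ 2) * h4
    + c ^ 2 * hu

theorem add_pow_four_of_sq_eq_zero (h4 : (4 : A) = 0) {a n : A} (hn : n ^ 2 = 0) :
    (a + n) ^ 4 = a ^ 4 := by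
  linear_combination a ^ 3 * n * h4 + (6 * a ^ 2 + 4 * a * n + n ^ 2) * hn

end CommRing

section QuotientSpan

variable {A B : Type*} [CommRing A] [CommRing B]

noncomputable def quotientSpanMap (g : A →+* B) (f : A[X]) :
    A[X] ⧸ Ideal.span {f} →+* B[X] ⧸ Ideal.span {f.map g} :=
  Ideal.quotientMap _ (mapRingHom g) (by
    rw [← Ideal.map_le_iff_le_comap, Ideal.map_span, Set.image_singleton]
    rfl)

theorem isNilpotent_of_quotientSpanMap_eq_zero {g : A →+* B} (hg : Function.Surjective g)
    (hker : ∀ a, g a = 0 → IsNilpotent a) {f : A[X]} {s : A[X] ⧸ Ideal.span {f}}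
    (hs : quotientSpanMap g f s = 0) : IsNilpotent s := by
  obtain ⟨p, rfl⟩ := Ideal.Quotient.mk_surjective s
  obtain ⟨h, hh⟩ := Ideal.mem_span_singleton'.mp (Ideal.Quotient.eq_zero_iff_mem.mp hs)
  obtain ⟨h', rfl⟩ := map_surjective g hg h
  have hq : (p - h' * f).map g = 0 := by
    rw [Polynomial.map_sub, Polynomial.map_mul]
    exact sub_eq_zero.mpr hh.symm
  have hmk : Ideal.Quotient.mk (Ideal.span {f}) p = Ideal.Quotient.mk _ (p - h' * f) :=
    Ideal.Quotient.eq.mpr (by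
      rw [sub_sub_cancel]
      exact Ideal.mul_mem_left _ _ (Ideal.mem_span_singleton_self f))
  rw [hmk]
  refine (Polynomial.isNilpotent_iff.mpr fun i => hker _ ?_).map _
  rw [← coeff_map, hq, coeff_zero]

end QuotientSpan

section GaloisExtension

theorem res_surjective : Function.Surjective res := by
  intro t
  obtain ⟨x, rfl⟩ := ZMod.ringHom_surjective (ZMod.castHom (show 2 ∣ 4 by norm_num) (ZMod 2)) t
  exact ⟨inl x, rfl⟩

theorem sq_eq_zero_of_res_eq_zero {a : R4} (ha : res a = 0) : a ^ 2 = 0 := by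
  have key : ∀ x y : ZMod 4, (ZMod.cast x : ZMod 2) = 0 → x * x = 0 ∧ x * y + x * y = 0 := by
    decide
  obtain ⟨hfst, hsnd⟩ := key a.fst a.snd ha
  ext
  · simpa [pow_two] using hfst
  · simpa [pow_two, mul_comm] using hsnd

theorem four_eq_zero_R4 : (4 : R4) = 0 := by
  ext <;> simp <;> decide

variable {f : R4[X]}

theorem four_eq_zero_GR : (4 : R4[X] ⧸ Ideal.span {f}) = 0 := by
  have h := congrArg (algebraMap R4 (R4[X] ⧸ Ideal.span {f})) four_eq_zero_R4
  rwa [map_ofNat, map_zero] at h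

theorem uGR_mul_self : uGR f * uGR f = 0 := by
  rw [uGR, ← map_mul, ← C_mul, eps_mul_eps, C_0, map_zero]

theorem isIdempotentElem_eq_zero_or_one_of_irreducible (hirr : Irreducible (f.map res))
    {e : R4[X] ⧸ Ideal.span {f}} (he : IsIdempotentElem e) : e = 0 ∨ e = 1 := by
  have : (Ideal.span {f.map res}).IsMaximal := PrincipalIdealRing.isMaximal_of_irreducible hirr
  let := Ideal.Quotient.field (Ideal.span {f.map res})
  refine he.eq_zero_or_one_of_ker_isNilpotent (quotientSpanMap res f) fun s hs => ?_
  exact isNilpotent_of_quotientSpanMap_eq_zero res_surjective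
    (fun b hb => ⟨2, sq_eq_zero_of_res_eq_zero hb⟩) hs

theorem eq_zero_or_isUnit_of_pow_two_pow_eq_self (hirr : Irreducible (f.map res)) {r : ℕ}
    (hr : 1 ≤ r) {a : R4[X] ⧸ Ideal.span {f}} (ha : a ^ 2 ^ r = a) : a = 0 ∨ IsUnit a :=
  eq_zero_or_isUnit_of_pow_eq_self
    (fun _ => isIdempotentElem_eq_zero_or_one_of_irreducible hirr)
    (Nat.le_self_pow (by omega) 2) ha

end GaloisExtension

theorem stmt8 (r : ℕ) (hr : 1 ≤ r) (f : Polynomial R4)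
    (hirr : Irreducible (f.map res))
    (a0 a1 a2 a3 : Polynomial R4 ⧸ Ideal.span {f})
    (h0 : a0 ^ 2 ^ r = a0) :
    (a0 + 2 * a1 + uGR f * a2 + 2 * (uGR f) * a3 ≠ 0 →
      (IsUnit (a0 + 2 * a1 + uGR f * a2 + 2 * (uGR f) * a3) ↔ a0 ≠ 0)) ∧
    (a0 + 2 * a1 + uGR f * a2 + 2 * (uGR f) * a3) ^ 4 = a0 ^ 4 := by
  have hn := sq_eq_zero_of_four_eq_zero four_eq_zero_GR uGR_mul_self a1 a2 a3
  rw [show a0 + 2 * a1 + uGR f * a2 + 2 * uGR f * a3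
      = a0 + (2 * a1 + uGR f * a2 + 2 * uGR f * a3) by ring]
  exact ⟨isUnit_add_iff_ne_zero_of_isNilpotent
      (eq_zero_or_isUnit_of_pow_two_pow_eq_self hirr hr h0) ⟨2, hn⟩,
    add_pow_four_of_sq_eq_zero four_eq_zero_GR hn⟩
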